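/- For every integer k ≥ 1 there exist real coefficients c_1, …, c_k with |c_i| ≤ 6^k · (2i + k)^k for all 1 ≤ i ≤ k, such that for every real x > 1/2 the k-th derivative of Ψ satisfies Ψ^{(k)}(x) = (Σ_{i=1}^{k} c_i / (2x−1)^{k+2i}) · Ψ(x). -/

import Mathlib

/-- Ψ(x) = 0 for x ≤ 1/2 and Ψ(x) = exp(1 − 1/(2x−1)²) for x > 1/2. -/
noncomputable def Psi (x : ℝ) : ℝ :=
  if x ≤ 1/2 then 0 else Real.exp (1 - 1/(2*x - 1)^2)

/-!
Writing u = 2x − 1, one has Ψ' = 4u⁻³Ψ on x > 1/2, so differentiating Ψ/uⁿ gives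
4Ψ/uⁿ⁺³ − 2nΨ/uⁿ⁺¹. Hence Ψ⁽ᵏ⁾ = ∑_{i=0}^{k} c_{k,i} Ψ/u^{k+2i}, where
c_{k+1,i} = 4c_{k,i−1} − 2(k+2i)c_{k,i}; the term i = 0 dies for k ≥ 1. With B = 2i + k + 1
the recursion gives |c_{k+1,i}| ≤ 6ᵏBᵏ(4 + 2B) ≤ 6ᵏ⁺¹Bᵏ⁺¹.
-/

open Finset

lemma Psi_eventuallyEq_exp {x : ℝ} (hx : 1/2 < x) :
    Psi =ᶠ[nhds x] fun y => Real.exp (1 - 1/(2*y - 1)^2) := by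
  filter_upwards [Ioi_mem_nhds hx] with y hy
  exact if_neg (not_le.mpr hy)

lemma hasDerivAt_two_mul_sub_one (x : ℝ) : HasDerivAt (fun y : ℝ => 2*y - 1) 2 x := by
  simpa using ((hasDerivAt_id x).const_mul 2).sub_const 1

lemma hasDerivAt_Psi {x : ℝ} (hx : 1/2 < x) :
    HasDerivAt Psi (4 / (2*x - 1)^3 * Psi x) x := by
  have hu : 2*x - 1 ≠ 0 := by linarith
  have hexp := (((hasDerivAt_const x (1 : ℝ)).fun_div ((hasDerivAt_two_mul_sub_one x).fun_pow 2)
    (pow_ne_zero 2 hu)).const_sub 1).exp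
  refine (hexp.congr_of_eventuallyEq (Psi_eventuallyEq_exp hx)).congr_deriv ?_
  rw [(Psi_eventuallyEq_exp hx).eq_of_nhds]
  field_simp
  ring

lemma hasDerivAt_Psi_div_pow (n : ℕ) {x : ℝ} (hx : 1/2 < x) :
    HasDerivAt (fun y => Psi y / (2*y - 1)^n)
      (4 * (Psi x / (2*x - 1)^(n+3)) - 2*n * (Psi x / (2*x - 1)^(n+1))) x := by
  have hu : 2*x - 1 ≠ 0 := by linarith
  refine ((hasDerivAt_Psi hx).fun_div ((hasDerivAt_two_mul_sub_one x).fun_pow n)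
    (pow_ne_zero n hu)).congr_deriv ?_
  rcases n with _ | n
  · field_simp; ring
  · simp only [add_tsub_cancel_right]; push_cast; field_simp; ring

/-- `psiCoeff k i` is the coefficient c_{k,i} of Ψ(x)/(2x−1)^(k+2i) in Ψ⁽ᵏ⁾(x). -/
def psiCoeff : ℕ → ℕ → ℝ
  | 0, 0 => 1
  | 0, _ + 1 => 0
  | k + 1, 0 => -2 * k * psiCoeff k 0
  | k + 1, i + 1 => 4 * psiCoeff k i - 2 * (k + 2 * (i + 1)) * psiCoeff k (i + 1)

lemma psiCoeff_eq_zero_of_lt {k i : ℕ} (h : k < i) : psiCoeff k i = 0 := by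
  induction k generalizing i with
  | zero => obtain ⟨i, rfl⟩ := Nat.exists_eq_add_one_of_ne_zero (by omega : i ≠ 0); rfl
  | succ k ih =>
    obtain ⟨i, rfl⟩ := Nat.exists_eq_add_one_of_ne_zero (by omega : i ≠ 0)
    rw [psiCoeff, ih (by omega), ih (by omega)]
    ring

lemma psiCoeff_succ_zero (k : ℕ) : psiCoeff (k + 1) 0 = 0 := by
  induction k with
  | zero => simp [psiCoeff]
  | succ k ih => rw [psiCoeff, ih, mul_zero]

lemma abs_psiCoeff_le (k i : ℕ) : |psiCoeff k i| ≤ 6^k * (2*i + k)^k := by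
  induction k generalizing i with
  | zero => cases i <;> simp [psiCoeff]
  | succ k ih =>
    cases i with
    | zero => rw [psiCoeff_succ_zero, abs_zero]; positivity
    | succ i =>
      set B : ℝ := 2 * ((i + 1 : ℕ) : ℝ) + ((k + 1 : ℕ) : ℝ)
      have hB : 1 ≤ B := by
        simp only [B]; push_cast; linarith [i.cast_nonneg (α := ℝ), k.cast_nonneg (α := ℝ)]
      have hprev (j : ℕ) (hj : j ≤ i + 1) : |psiCoeff k j| ≤ 6^k * B^k := by
        refine (ih j).trans ?_
        gcongr
        simp only [B]; push_cast; linarith [(show (j : ℝ) ≤ i + 1 by exact_mod_cast hj)]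
      calc |psiCoeff (k + 1) (i + 1)|
          ≤ 4 * |psiCoeff k i| + 2 * (k + 2 * (i + 1)) * |psiCoeff k (i + 1)| := by
            rw [psiCoeff]
            refine (abs_sub _ _).trans_eq ?_
            have hc : (0 : ℝ) ≤ 2 * (k + 2 * (i + 1)) := by positivity
            rw [abs_mul, abs_mul, abs_of_nonneg hc, abs_of_nonneg (by norm_num : (0 : ℝ) ≤ 4)]
        _ ≤ 4 * (6^k * B^k) + 2 * B * (6^k * B^k) := by
            gcongr
            · exact hprev i (by omega)
            · simp only [B]; push_cast; linarith
            · exact hprev (i + 1) le_rfl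
        _ ≤ 6^(k + 1) * B^(k + 1) := by
            have : 0 ≤ 6^k * B^k := by positivity
            rw [pow_succ, pow_succ]; nlinarith

lemma sum_psiCoeff_succ (k : ℕ) (g : ℕ → ℝ) :
    ∑ i ∈ range (k + 1),
        psiCoeff k i * (4 * g (k + 2*i + 3) - 2 * (k + 2*i : ℕ) * g (k + 2*i + 1))
      = ∑ i ∈ range (k + 2), psiCoeff (k + 1) i * g (k + 1 + 2*i) := by
  set A : ℕ → ℝ := fun i => 4 * psiCoeff k i * g (k + 2*i + 3)
  set B : ℕ → ℝ := fun i => 2 * (k + 2*i : ℕ) * psiCoeff k i * g (k + 2*i + 1)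
  have hshift : ∑ i ∈ range (k + 1), B i = ∑ i ∈ range (k + 1), B (i + 1) + B 0 := by
    have hlast : B (k + 1) = 0 := by simp [B, psiCoeff_eq_zero_of_lt]
    rw [← sum_range_succ', sum_range_succ _ (k + 1), hlast, add_zero]
  have hsucc (i : ℕ) : psiCoeff (k + 1) (i + 1) * g (k + 1 + 2*(i + 1)) = A i - B (i + 1) := by
    simp only [psiCoeff, A, B]; push_cast; ring_nf
  have hzero : psiCoeff (k + 1) 0 * g (k + 1 + 2*0) = -B 0 := by
    simp only [psiCoeff, B]; push_cast; ring_nf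
  calc _ = ∑ i ∈ range (k + 1), A i - ∑ i ∈ range (k + 1), B i := by
        rw [← sum_sub_distrib]; exact sum_congr rfl fun i _ => by ring
    _ = ∑ i ∈ range (k + 1), (A i - B (i + 1)) - B 0 := by rw [hshift, sum_sub_distrib]; ring
    _ = _ := by simp only [sum_range_succ' _ (k + 1), hsucc, hzero, sub_eq_add_neg]

lemma iteratedDeriv_Psi (k : ℕ) {x : ℝ} (hx : 1/2 < x) :
    iteratedDeriv k Psi x =
      ∑ i ∈ range (k + 1), psiCoeff k i * (Psi x / (2*x - 1)^(k + 2*i)) := by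
  induction k generalizing x with
  | zero => simp [psiCoeff]
  | succ k ih =>
    have hev : iteratedDeriv k Psi =ᶠ[nhds x]
        fun y => ∑ i ∈ range (k + 1), psiCoeff k i * (Psi y / (2*y - 1)^(k + 2*i)) := by
      filter_upwards [Ioi_mem_nhds hx] with y hy using ih hy
    rw [iteratedDeriv_succ, hev.deriv_eq,
      (HasDerivAt.fun_sum fun i _ => (hasDerivAt_Psi_div_pow _ hx).const_mul _).deriv]
    exact sum_psiCoeff_succ k fun n => Psi x / (2*x - 1)^n

/-- For every k ≥ 1 there exist coefficients c₁,…,c_k with |c_i| ≤ 6^k·(2i+k)^k such that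
for every x > 1/2, Ψ^{(k)}(x) = (Σ_{i=1}^k c_i/(2x−1)^{k+2i})·Ψ(x). -/
theorem stmt6 (k : ℕ) (hk : 1 ≤ k) :
    ∃ c : ℕ → ℝ,
      (∀ i, 1 ≤ i → i ≤ k → |c i| ≤ 6 ^ k * (2 * (i : ℝ) + (k : ℝ)) ^ k) ∧
      ∀ x : ℝ, 1/2 < x →
        iteratedDeriv k Psi x =
          (∑ i ∈ Finset.Icc 1 k, c i / (2*x - 1) ^ (k + 2*i)) * Psi x := by
  obtain ⟨k, rfl⟩ := Nat.exists_eq_add_one_of_ne_zero (by omega : k ≠ 0)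
  refine ⟨psiCoeff (k + 1), fun i _ _ => abs_psiCoeff_le (k + 1) i, fun x hx => ?_⟩
  rw [iteratedDeriv_Psi (k + 1) hx, sum_range_succ', psiCoeff_succ_zero, zero_mul, add_zero,
    sum_mul, ← Ico_add_one_right_eq_Icc, sum_Ico_eq_sum_range]
  exact sum_congr rfl fun i _ => by rw [add_comm 1 i]; ring
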